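/- arXiv:1208.2634 — 2 statements merged into one kernel-verified Lean document; each statement's English description precedes it below -/
import Mathlib

section
/- Let u : U → ℝ be a smooth solution of the Tzitzeica equation u_{zz̄} = e^{-2u} - e^u on an open set U ⊆ ℂ, and let P : U → ℂ be a smooth solution of the linearized equation P_{zz̄} + (e^u + 2e^{-2u})P = 0. Then ∂/∂z̄ (P_{zz} + 2u_z·P_z) = ∂/∂z (3e^u·P), i.e. the one-form (P_{zz} + 2u_z P_z) dz - 3e^u P dz̄ is closed (up to an overall constant). -/
/-- The Wirtinger derivative ∂/∂z = (∂/∂x - i ∂/∂y)/2 of a function ℂ → ℂ. -/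
noncomputable def wz (f : ℂ → ℂ) (z : ℂ) : ℂ :=
  (fderiv ℝ f z 1 - Complex.I * fderiv ℝ f z Complex.I) / 2

/-- The Wirtinger derivative ∂/∂z̄ = (∂/∂x + i ∂/∂y)/2 of a function ℂ → ℂ. -/
noncomputable def wzb (f : ℂ → ℂ) (z : ℂ) : ℂ :=
  (fderiv ℝ f z 1 + Complex.I * fderiv ℝ f z Complex.I) / 2

open Complex Filter Topology

section tools
variable {f g : ℂ → ℂ} {z : ℂ}

lemma wz_congr (h : f =ᶠ[𝓝 z] g) : wz f z = wz g z := by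
  unfold wz; rw [h.fderiv_eq]

lemma wz_add (hf : DifferentiableAt ℝ f z) (hg : DifferentiableAt ℝ g z) :
    wz (fun w => f w + g w) z = wz f z + wz g z := by
  unfold wz
  rw [fderiv_fun_add hf hg]
  simp; ring

lemma wzb_add (hf : DifferentiableAt ℝ f z) (hg : DifferentiableAt ℝ g z) :
    wzb (fun w => f w + g w) z = wzb f z + wzb g z := by
  unfold wzb
  rw [fderiv_fun_add hf hg]
  simp; ring

lemma wz_mul (hf : DifferentiableAt ℝ f z) (hg : DifferentiableAt ℝ g z) :
    wz (fun w => f w * g w) z = wz f z * g z + f z * wz g z := by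
  unfold wz
  rw [fderiv_fun_mul hf hg]
  simp [smul_eq_mul]; ring

lemma wzb_mul (hf : DifferentiableAt ℝ f z) (hg : DifferentiableAt ℝ g z) :
    wzb (fun w => f w * g w) z = wzb f z * g z + f z * wzb g z := by
  unfold wzb
  rw [fderiv_fun_mul hf hg]
  simp [smul_eq_mul]; ring

lemma wz_const_mul (c : ℂ) (hf : DifferentiableAt ℝ f z) :
    wz (fun w => c * f w) z = c * wz f z := by
  rw [wz_mul (differentiableAt_const c) hf]
  simp [wz]

lemma wz_exp_comp (hf : DifferentiableAt ℝ f z) :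
    wz (fun w => Complex.exp (f w)) z = Complex.exp (f z) * wz f z := by
  have h1 : HasDerivAt Complex.exp (Complex.exp (f z)) (f z) := Complex.hasDerivAt_exp (f z)
  have h : HasFDerivAt (fun w => Complex.exp (f w))
      (Complex.exp (f z) • fderiv ℝ f z) z := h1.comp_hasFDerivAt z hf.hasFDerivAt
  unfold wz
  rw [h.fderiv]
  simp [smul_eq_mul]; ring

/-- smoothness of `wz f`. -/
lemma wz_contDiffAt (hf : ContDiffAt ℝ (⊤ : ℕ∞) f z) : ContDiffAt ℝ (⊤ : ℕ∞) (wz f) z := by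
  have hD : ContDiffAt ℝ (⊤ : ℕ∞) (fderiv ℝ f) z := hf.fderiv_right (by simp)
  have h1 : ContDiffAt ℝ (⊤ : ℕ∞) (fun w => fderiv ℝ f w 1) z := hD.clm_apply contDiffAt_const
  have h2 : ContDiffAt ℝ (⊤ : ℕ∞) (fun w => fderiv ℝ f w Complex.I) z := hD.clm_apply contDiffAt_const
  exact ((h1.sub (contDiffAt_const.mul h2)).div_const 2)

lemma fderiv_fderiv_apply (hf : DifferentiableAt ℝ (fderiv ℝ f) z) (v w : ℂ) :
    fderiv ℝ (fun y => fderiv ℝ f y v) z w = fderiv ℝ (fderiv ℝ f) z w v := by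
  have h : HasFDerivAt (fun y => fderiv ℝ f y v)
      ((ContinuousLinearMap.apply ℝ ℂ v).comp (fderiv ℝ (fderiv ℝ f) z)) z :=
    (ContinuousLinearMap.apply ℝ ℂ v).hasFDerivAt.comp z hf.hasFDerivAt
  rw [h.fderiv]; rfl

/-- Clairaut for Wirtinger derivatives. -/
lemma wzb_wz_comm (hf : ContDiffAt ℝ (⊤ : ℕ∞) f z) : wzb (wz f) z = wz (wzb f) z := by
  have hD : ContDiffAt ℝ (⊤ : ℕ∞) (fderiv ℝ f) z := hf.fderiv_right (by simp)
  have hDd : DifferentiableAt ℝ (fderiv ℝ f) z := hD.differentiableAt (by simp)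
  have hsym := hf.isSymmSndFDerivAt (by rw [minSmoothness_of_isRCLikeNormedField]; show ((2:ℕ∞) : WithTop ℕ∞) ≤ ((⊤:ℕ∞):WithTop ℕ∞); exact WithTop.coe_le_coe.mpr le_top)
  have h1 : DifferentiableAt ℝ (fun w => fderiv ℝ f w 1) z :=
    (hD.clm_apply contDiffAt_const).differentiableAt (by simp)
  have h2 : DifferentiableAt ℝ (fun w => fderiv ℝ f w Complex.I) z :=
    (hD.clm_apply contDiffAt_const).differentiableAt (by simp)
  have key : ∀ v : ℂ,
      fderiv ℝ (fun w => (fderiv ℝ f w 1 - Complex.I * fderiv ℝ f w Complex.I)/2) z v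
        = (fderiv ℝ (fderiv ℝ f) z v 1 - Complex.I * fderiv ℝ (fderiv ℝ f) z v Complex.I)/2 := by
    intro v
    have e : (fun w => (fderiv ℝ f w 1 - Complex.I * fderiv ℝ f w Complex.I)/2)
        = fun w => (fderiv ℝ f w 1 - Complex.I * fderiv ℝ f w Complex.I) * (2:ℂ)⁻¹ := by
      funext w; ring
    rw [e, fderiv_mul_const (h1.fun_sub (h2.const_mul _)), fderiv_fun_sub h1 (h2.const_mul _),
        fderiv_const_mul h2]
    simp [smul_eq_mul, fderiv_fderiv_apply hDd]
    ring
  have keyb : ∀ v : ℂ,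
      fderiv ℝ (fun w => (fderiv ℝ f w 1 + Complex.I * fderiv ℝ f w Complex.I)/2) z v
        = (fderiv ℝ (fderiv ℝ f) z v 1 + Complex.I * fderiv ℝ (fderiv ℝ f) z v Complex.I)/2 := by
    intro v
    have e : (fun w => (fderiv ℝ f w 1 + Complex.I * fderiv ℝ f w Complex.I)/2)
        = fun w => (fderiv ℝ f w 1 + Complex.I * fderiv ℝ f w Complex.I) * (2:ℂ)⁻¹ := by
      funext w; ring
    rw [e, fderiv_mul_const (h1.fun_add (h2.const_mul _)), fderiv_fun_add h1 (h2.const_mul _),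
        fderiv_const_mul h2]
    simp [smul_eq_mul, fderiv_fderiv_apply hDd]
    ring
  show (fderiv ℝ (wz f) z 1 + Complex.I * fderiv ℝ (wz f) z Complex.I) / 2
      = (fderiv ℝ (wzb f) z 1 - Complex.I * fderiv ℝ (wzb f) z Complex.I) / 2
  have e1 : wz f = fun w => (fderiv ℝ f w 1 - Complex.I * fderiv ℝ f w Complex.I)/2 := rfl
  have e2 : wzb f = fun w => (fderiv ℝ f w 1 + Complex.I * fderiv ℝ f w Complex.I)/2 := rfl
  rw [e1, e2, key, key, keyb, keyb, hsym 1 Complex.I]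
  ring
end tools

lemma wzb_const_mul (c : ℂ) {f : ℂ → ℂ} {z : ℂ} (hf : DifferentiableAt ℝ f z) :
    wzb (fun w => c * f w) z = c * wzb f z := by
  rw [wzb_mul (differentiableAt_const c) hf]
  simp [wzb]

/-- If `u` solves the Tzitzeica equation `u_{zz̄} = e^{-2u} - e^u` on an open `U ⊆ ℂ`
and `P` solves the linearization `P_{zz̄} + (e^u + 2e^{-2u})P = 0`, then the one-form
`(P_{zz} + 2u_z P_z) dz - 3e^u P dz̄` is closed on `U`, i.e.
`∂_z̄ (P_{zz} + 2u_z P_z) = ∂_z (-3 e^u P)`. -/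
theorem tzitzeica_recursion_one_form_closed (u : ℂ → ℝ) (P : ℂ → ℂ) (U : Set ℂ)
    (hU : IsOpen U) (hu : ContDiffOn ℝ (⊤ : ℕ∞) u U) (hP : ContDiffOn ℝ (⊤ : ℕ∞) P U)
    (hueq : ∀ z ∈ U, wz (wzb (fun w => (u w : ℂ))) z
      = Complex.exp (-2 * (u z : ℂ)) - Complex.exp (u z : ℂ))
    (hPeq : ∀ z ∈ U, wz (wzb P) z
      + (Complex.exp (u z : ℂ) + 2 * Complex.exp (-2 * (u z : ℂ))) * P z = 0) :
    ∀ z ∈ U, wzb (fun w => wz (wz P) w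
        + 2 * wz (fun x => (u x : ℂ)) w * wz P w) z
      = wz (fun w => -(3 * Complex.exp (u w : ℂ) * P w)) z := by
  set uc : ℂ → ℂ := fun w => (u w : ℂ) with huc_def
  set A : ℂ → ℂ := fun w => Complex.exp (uc w) with hA_def
  set B : ℂ → ℂ := fun w => Complex.exp (-2 * uc w) with hB_def
  have hucU : ContDiffOn ℝ (⊤ : ℕ∞) uc U := Complex.ofRealCLM.contDiff.comp_contDiffOn hu
  have hucCD : ∀ z ∈ U, ContDiffAt ℝ (⊤ : ℕ∞) uc z := fun z hzU =>
    (hucU z hzU).contDiffAt (hU.mem_nhds hzU)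
  have hPCD : ∀ z ∈ U, ContDiffAt ℝ (⊤ : ℕ∞) P z := fun z hzU =>
    (hP z hzU).contDiffAt (hU.mem_nhds hzU)
  have hACD : ∀ z ∈ U, ContDiffAt ℝ (⊤ : ℕ∞) A z := fun z hzU =>
    Complex.contDiff_exp.contDiffAt.comp z (hucCD z hzU)
  have hBCD : ∀ z ∈ U, ContDiffAt ℝ (⊤ : ℕ∞) B z := fun z hzU =>
    Complex.contDiff_exp.contDiffAt.comp z (contDiffAt_const.mul (hucCD z hzU))
  intro z0 hz0
  have hmem : U ∈ 𝓝 z0 := hU.mem_nhds hz0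
  -- various smoothness / differentiability facts at z0
  have hP0 : ContDiffAt ℝ (⊤ : ℕ∞) P z0 := hPCD z0 hz0
  have huc0 : ContDiffAt ℝ (⊤ : ℕ∞) uc z0 := hucCD z0 hz0
  have hdP0 : ContDiffAt ℝ (⊤ : ℕ∞) (wz P) z0 := wz_contDiffAt hP0
  have hddP0 : ContDiffAt ℝ (⊤ : ℕ∞) (wz (wz P)) z0 := wz_contDiffAt hdP0
  have hdu0 : ContDiffAt ℝ (⊤ : ℕ∞) (wz uc) z0 := wz_contDiffAt huc0
  have dP0 : DifferentiableAt ℝ P z0 := hP0.differentiableAt (by simp)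
  have duc0 : DifferentiableAt ℝ uc z0 := huc0.differentiableAt (by simp)
  have ddP0d : DifferentiableAt ℝ (wz (wz P)) z0 := hddP0.differentiableAt (by simp)
  have dP0d : DifferentiableAt ℝ (wz P) z0 := hdP0.differentiableAt (by simp)
  have du0d : DifferentiableAt ℝ (wz uc) z0 := hdu0.differentiableAt (by simp)
  have dA0 : DifferentiableAt ℝ A z0 := (hACD z0 hz0).differentiableAt (by simp)
  have dB0 : DifferentiableAt ℝ B z0 := (hBCD z0 hz0).differentiableAt (by simp)
  -- the PDE hypotheses rewritten
  have hmix : ∀ z ∈ U, wzb (wz P) z = -((A z + 2 * B z) * P z) := by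
    intro z hzU
    rw [wzb_wz_comm (hPCD z hzU)]
    have := hPeq z hzU
    rw [hA_def, hB_def]
    simp only
    linear_combination this
  have hmix_ev : wzb (wz P) =ᶠ[𝓝 z0] fun w => -((A w + 2 * B w) * P w) :=
    Filter.eventuallyEq_of_mem hmem hmix
  -- split the left-hand side
  have hprod_d : DifferentiableAt ℝ (fun w => 2 * wz uc w * wz P w) z0 := by
    exact ((du0d.const_mul 2).mul dP0d)
  rw [wzb_add ddP0d hprod_d]
  have hterm2 : wzb (fun w => 2 * wz uc w * wz P w) z0
      = 2 * wzb (wz uc) z0 * wz P z0 + 2 * wz uc z0 * wzb (wz P) z0 := by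
    rw [wzb_mul (du0d.const_mul 2) dP0d, wzb_const_mul 2 du0d]
  rw [hterm2]
  -- term: wzb (wz uc) z0
  have hu_mix : wzb (wz uc) z0 = B z0 - A z0 := by
    rw [wzb_wz_comm huc0]
    exact hueq z0 hz0
  have hmain : wzb (wz (wz P)) z0 = wz (fun w => -((A w + 2 * B w) * P w)) z0 := by
    rw [wzb_wz_comm hdP0]
    exact wz_congr hmix_ev
  rw [hmain, hu_mix, hmix z0 hz0]
  -- derivatives of A and B
  have hwzA : wz A z0 = A z0 * wz uc z0 := wz_exp_comp duc0
  have hwzB : wz B z0 = B z0 * (-2 * wz uc z0) := by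
    rw [hB_def]
    simp only
    rw [wz_exp_comp (duc0.const_mul (-2)), wz_const_mul (-2) duc0]
  -- expand wz G z0
  have hG : wz (fun w => -((A w + 2 * B w) * P w)) z0
      = -((wz A z0 + 2 * wz B z0) * P z0 + (A z0 + 2 * B z0) * wz P z0) := by
    have hAB : DifferentiableAt ℝ (fun w => A w + 2 * B w) z0 := dA0.add (dB0.const_mul 2)
    have e : (fun w => -((A w + 2 * B w) * P w))
        = fun w => (-1 : ℂ) * ((A w + 2 * B w) * P w) := by funext w; ring
    rw [e, wz_const_mul (-1) (hAB.fun_mul dP0), wz_mul hAB dP0, wz_add dA0 (dB0.const_mul 2),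
      wz_const_mul 2 dB0]
    ring
  rw [hG, hwzA, hwzB]
  -- expand the right-hand side
  have hR : wz (fun w => -(3 * A w * P w)) z0
      = -(3 * (A z0 * wz uc z0) * P z0 + 3 * A z0 * wz P z0) := by
    have e : (fun w => -(3 * A w * P w)) = fun w => (-1 : ℂ) * ((3 * A w) * P w) := by
      funext w; ring
    rw [e, wz_const_mul (-1) ((dA0.const_mul 3).fun_mul dP0), wz_mul (dA0.const_mul 3) dP0,
      wz_const_mul 3 dA0, hwzA]
    ring
  rw [show (fun w => -(3 * Complex.exp (u w : ℂ) * P w)) = fun w => -(3 * A w * P w) from rfl, hR]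
  ring
end

section
/- Let α ∈ ℝ, α ≠ 0, let f : ℝ → ℝ be smooth with f'' = αf' + 2α²f, and let u : U → ℝ be a smooth solution of u_{zz̄} = -f(u) on an open set U ⊆ ℂ. Writing u₀ = u_z, u₁ = u_{zz}, u₂ = ∂_z³u, u₃ = ∂_z⁴u, u₄ = ∂_z⁵u, the function P := u₄ - 5α·u₂u₁ - 5α²·u₂u₀² - 5α²·u₁²u₀ + α⁴·u₀⁵ satisfies the linearized equation P_{zz̄} + f'(u)·P = 0. -/
open ContDiff

/-- Generic Wirtinger-type derivative with parameter `c`. -/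
noncomputable def wd (c : ℂ) (g : ℂ → ℂ) (z : ℂ) : ℂ :=
  (fderiv ℝ g z 1 + c * fderiv ℝ g z Complex.I) / 2

lemma wz_eq_wd : wz = wd (-Complex.I) := by
  funext g z; simp only [wz, wd]; ring

lemma wzb_eq_wd : wzb = wd Complex.I := rfl

section Rules

variable {U : Set ℂ} {g₁ g₂ : ℂ → ℂ} {z c c' : ℂ}

lemma wd_congr (hU : IsOpen U) (hgh : ∀ w ∈ U, g₁ w = g₂ w) (hz : z ∈ U) :
    wd c g₁ z = wd c g₂ z := by
  have : fderiv ℝ g₁ z = fderiv ℝ g₂ z :=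
    Filter.EventuallyEq.fderiv_eq (by filter_upwards [hU.mem_nhds hz] using hgh)
  simp [wd, this]

lemma wd_const (a : ℂ) : wd c (fun _ => a) z = 0 := by simp [wd]

lemma wd_add (hg : DifferentiableAt ℝ g₁ z) (hh : DifferentiableAt ℝ g₂ z) :
    wd c (fun w => g₁ w + g₂ w) z = wd c g₁ z + wd c g₂ z := by
  simp only [wd, fderiv_fun_add hg hh, ContinuousLinearMap.add_apply]; ring

lemma wd_neg : wd c (fun w => -g₁ w) z = -wd c g₁ z := by
  simp only [wd, fderiv_fun_neg, ContinuousLinearMap.neg_apply]; ring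

lemma wd_sub (hg : DifferentiableAt ℝ g₁ z) (hh : DifferentiableAt ℝ g₂ z) :
    wd c (fun w => g₁ w - g₂ w) z = wd c g₁ z - wd c g₂ z := by
  simp only [wd, fderiv_fun_sub hg hh, ContinuousLinearMap.sub_apply]; ring

lemma wd_mul (hg : DifferentiableAt ℝ g₁ z) (hh : DifferentiableAt ℝ g₂ z) :
    wd c (fun w => g₁ w * g₂ w) z = wd c g₁ z * g₂ z + g₁ z * wd c g₂ z := by
  simp only [wd, fderiv_fun_mul hg hh, ContinuousLinearMap.add_apply,
    ContinuousLinearMap.smul_apply, smul_eq_mul]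
  ring

lemma wd_pow (n : ℕ) (hg : DifferentiableAt ℝ g₁ z) :
    wd c (fun w => g₁ w ^ n) z = n * g₁ z ^ (n - 1) * wd c g₁ z := by
  induction n with
  | zero => simpa using wd_const (c := c) (z := z) 1
  | succ n ih =>
    have e : (fun w => g₁ w ^ (n + 1)) = fun w => g₁ w ^ n * g₁ w := by
      funext w; rw [pow_succ]
    rw [e, wd_mul (g₁ := fun w => g₁ w ^ n) (hg.pow n) hg, ih]
    cases n with
    | zero => simp
    | succ m =>
      simp only [Nat.add_sub_cancel]
      push_cast
      ring

lemma wd_contDiffOn (hU : IsOpen U) (hg : ContDiffOn ℝ ∞ g₁ U) :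
    ContDiffOn ℝ ∞ (wd c g₁) U := by
  have hfd : ContDiffOn ℝ ∞ (fun w => fderiv ℝ g₁ w) U :=
    hg.fderiv_of_isOpen hU (by norm_cast)
  have h1 : ContDiffOn ℝ ∞ (fun w => fderiv ℝ g₁ w 1) U :=
    (ContinuousLinearMap.apply ℝ ℂ (1 : ℂ)).contDiff.comp_contDiffOn hfd
  have h2 : ContDiffOn ℝ ∞ (fun w => fderiv ℝ g₁ w Complex.I) U :=
    (ContinuousLinearMap.apply ℝ ℂ (Complex.I : ℂ)).contDiff.comp_contDiffOn hfd
  exact (h1.add (contDiffOn_const.mul h2)).div_const 2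

lemma diffAt {F : Type*} [NormedAddCommGroup F] [NormedSpace ℝ F] {g : ℂ → F}
    (hU : IsOpen U) (hg : ContDiffOn ℝ ∞ g U) (hz : z ∈ U) :
    DifferentiableAt ℝ g z :=
  (hg.differentiableOn (by norm_cast)).differentiableAt (hU.mem_nhds hz)

lemma wd_comm (hU : IsOpen U) (hg : ContDiffOn ℝ ∞ g₁ U) (hz : z ∈ U) :
    wd c (wd c' g₁) z = wd c' (wd c g₁) z := by
  set K := fderiv ℝ (fderiv ℝ g₁) z with hK
  have hfd : ContDiffOn ℝ ∞ (fun w => fderiv ℝ g₁ w) U :=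
    hg.fderiv_of_isOpen hU (by norm_cast)
  have hKd : DifferentiableAt ℝ (fun w => fderiv ℝ g₁ w) z := diffAt hU hfd hz
  have hsymm : ∀ v w : ℂ, K v w = K w v :=
    (hg.contDiffAt (hU.mem_nhds hz)).isSymmSndFDerivAt (by rw [minSmoothness_of_isRCLikeNormedField]; norm_cast)
  have hv : ∀ v : ℂ, HasFDerivAt (fun w => fderiv ℝ g₁ w v)
      ((ContinuousLinearMap.apply ℝ ℂ v).comp K) z :=
    fun v => (ContinuousLinearMap.apply ℝ ℂ v).hasFDerivAt.comp z hKd.hasFDerivAt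
  have key : ∀ d : ℂ, fderiv ℝ (wd d g₁) z =
      ((1 : ℝ) / 2) • (((ContinuousLinearMap.apply ℝ ℂ (1 : ℂ)).comp K) +
        d • ((ContinuousLinearMap.apply ℝ ℂ Complex.I).comp K)) := by
    intro d
    have : HasFDerivAt (wd d g₁)
        (((1 : ℝ) / 2) • (((ContinuousLinearMap.apply ℝ ℂ (1 : ℂ)).comp K) +
        d • ((ContinuousLinearMap.apply ℝ ℂ Complex.I).comp K))) z := by
      have := ((hv 1).add ((hv Complex.I).const_mul d)).const_smul ((1 : ℝ) / 2)
      convert this using 1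
      any_goals rfl
      funext w
      simp [wd]
      ring
    exact this.fderiv
  simp only [wd, key, ContinuousLinearMap.smul_apply, ContinuousLinearMap.add_apply,
    ContinuousLinearMap.coe_smul', Pi.smul_apply, ContinuousLinearMap.coe_comp',
    Function.comp_apply, ContinuousLinearMap.apply_apply, smul_eq_mul]
  rw [hsymm Complex.I 1]
  simp only [Complex.real_smul]
  push_cast
  ring

lemma fderiv_ofReal_comp {u : ℂ → ℝ} (hu : DifferentiableAt ℝ u z) :
    fderiv ℝ (fun w => ((u w : ℝ) : ℂ)) z = Complex.ofRealCLM.comp (fderiv ℝ u z) :=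
  (Complex.ofRealCLM.hasFDerivAt.comp z hu.hasFDerivAt).fderiv

lemma wd_comp_real (F : ℝ → ℝ) (u : ℂ → ℝ) (hF : DifferentiableAt ℝ F (u z))
    (hu : DifferentiableAt ℝ u z) :
    wd c (fun w => ((F (u w) : ℝ) : ℂ)) z
      = ((deriv F (u z) : ℝ) : ℂ) * wd c (fun w => ((u w : ℝ) : ℂ)) z := by
  have hFu : DifferentiableAt ℝ (fun w => F (u w)) z := hF.comp z hu
  have h1 : fderiv ℝ (fun w => ((F (u w) : ℝ) : ℂ)) z
      = Complex.ofRealCLM.comp (fderiv ℝ (fun w => F (u w)) z) :=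
    fderiv_ofReal_comp hFu
  have h2 : fderiv ℝ (fun w => F (u w)) z = (fderiv ℝ F (u z)).comp (fderiv ℝ u z) :=
    fderiv_comp z hF hu
  have h3 : ∀ t : ℝ, fderiv ℝ F (u z) t = t * deriv F (u z) := by
    intro t
    have : t = t • (1 : ℝ) := by simp
    rw [this, ContinuousLinearMap.map_smul]
    simp [fderiv_apply_one_eq_deriv]
  rw [wd, wd, h1, h2, fderiv_ofReal_comp hu]
  simp only [ContinuousLinearMap.coe_comp', Function.comp_apply, h3,
    Complex.ofRealCLM_apply]
  push_cast
  ring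

end Rules

/-- For a smooth solution `u` of `u_{zz̄} = -f(u)` with `f'' = αf' + 2α²f` (`α ≠ 0`),
writing `uⱼ = ∂_z^{j+1} u`, the weighted-degree-5 function
`P = u₄ - 5α u₂u₁ - 5α² u₂u₀² - 5α² u₁²u₀ + α⁴ u₀⁵`
satisfies the linearized equation `P_{zz̄} + f'(u)·P = 0`. -/
theorem tzitzeica_degree_five_jacobi_field (α : ℝ) (hα : α ≠ 0) (f : ℝ → ℝ)
    (hf : ContDiff ℝ (⊤ : ℕ∞) f)
    (hode : ∀ x : ℝ, deriv (deriv f) x = α * deriv f x + 2 * α ^ 2 * f x)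
    (u : ℂ → ℝ) (U : Set ℂ) (hU : IsOpen U) (hu : ContDiffOn ℝ (⊤ : ℕ∞) u U)
    (hueq : ∀ z ∈ U, wz (wzb (fun w => (u w : ℂ))) z = -(f (u z) : ℂ)) :
    ∀ z ∈ U,
      (fun P : ℂ → ℂ => wz (wzb P) z + ((deriv f (u z) : ℝ) : ℂ) * P z)
        (fun w =>
          (let u0 := wz (fun x => (u x : ℂ))
           let u1 := wz u0
           let u2 := wz u1
           let u3 := wz u2
           let u4 := wz u3
           u4 w - 5 * (α : ℂ) * u2 w * u1 w - 5 * (α : ℂ) ^ 2 * u2 w * (u0 w) ^ 2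
             - 5 * (α : ℂ) ^ 2 * (u1 w) ^ 2 * u0 w + (α : ℂ) ^ 4 * (u0 w) ^ 5)) = 0 := by
  intro z hz
  simp only [wz_eq_wd, wzb_eq_wd] at hueq ⊢
  set v : ℂ → ℂ := fun w => ((u w : ℝ) : ℂ) with hvdef
  set u0 : ℂ → ℂ := wd (-Complex.I) v with hu0def
  set u1 : ℂ → ℂ := wd (-Complex.I) u0 with hu1def
  set u2 : ℂ → ℂ := wd (-Complex.I) u1 with hu2def
  set u3 : ℂ → ℂ := wd (-Complex.I) u2 with hu3def
  set u4 : ℂ → ℂ := wd (-Complex.I) u3 with hu4def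
  set hc : ℂ → ℂ := fun w => ((f (u w) : ℝ) : ℂ) with hhcdef
  set gc : ℂ → ℂ := fun w => ((deriv f (u w) : ℝ) : ℂ) with hgcdef
  set g2 : ℂ → ℂ := fun w => ((deriv (deriv f) (u w) : ℝ) : ℂ) with hg2def
  set g3 : ℂ → ℂ := fun w => ((deriv (deriv (deriv f)) (u w) : ℝ) : ℂ) with hg3def
  set g4 : ℂ → ℂ := fun w => ((deriv (deriv (deriv (deriv f))) (u w) : ℝ) : ℂ) with hg4def
  -- smoothness of f and its derivatives
  have hfi : ContDiff ℝ ∞ f := hf.of_le (by simp)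
  have hf1 : ContDiff ℝ ∞ (deriv f) := (contDiff_infty_iff_deriv.mp hfi).2
  have hf2 : ContDiff ℝ ∞ (deriv (deriv f)) := (contDiff_infty_iff_deriv.mp hf1).2
  have hf3 : ContDiff ℝ ∞ (deriv (deriv (deriv f))) := (contDiff_infty_iff_deriv.mp hf2).2
  have hone : (∞ : WithTop ℕ∞) ≠ 0 := by simp
  -- higher ODEs
  have hode3 : ∀ x : ℝ, deriv (deriv (deriv f)) x
      = 3 * α ^ 2 * deriv f x + 2 * α ^ 3 * f x := by
    intro x
    have h1 : deriv (deriv f) = fun y => α * deriv f y + 2 * α ^ 2 * f y := funext hode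
    rw [h1, deriv_fun_add (((hf1.differentiable hone) x).const_mul α)
        (((hfi.differentiable hone) x).const_mul (2 * α ^ 2)),
      deriv_const_mul α ((hf1.differentiable hone) x),
      deriv_const_mul (2 * α ^ 2) ((hfi.differentiable hone) x), hode x]
    ring
  have hode4 : ∀ x : ℝ, deriv (deriv (deriv (deriv f))) x
      = 5 * α ^ 3 * deriv f x + 6 * α ^ 4 * f x := by
    intro x
    have h1 : deriv (deriv (deriv f)) = fun y => 3 * α ^ 2 * deriv f y + 2 * α ^ 3 * f y :=
      funext hode3
    rw [h1, deriv_fun_add (((hf1.differentiable hone) x).const_mul (3 * α ^ 2))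
        (((hfi.differentiable hone) x).const_mul (2 * α ^ 3)),
      deriv_const_mul (3 * α ^ 2) ((hf1.differentiable hone) x),
      deriv_const_mul (2 * α ^ 3) ((hfi.differentiable hone) x), hode x]
    ring
  -- pointwise complex ODE forms
  have e2 : ∀ w : ℂ, g2 w = ↑α * gc w + 2 * ↑α ^ 2 * hc w := by
    intro w
    simp only [hg2def, hgcdef, hhcdef, hode (u w)]
    push_cast
    ring
  have e3 : ∀ w : ℂ, g3 w = 3 * ↑α ^ 2 * gc w + 2 * ↑α ^ 3 * hc w := by
    intro w
    simp only [hg3def, hgcdef, hhcdef, hode3 (u w)]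
    push_cast
    ring
  have e4 : ∀ w : ℂ, g4 w = 5 * ↑α ^ 3 * gc w + 6 * ↑α ^ 4 * hc w := by
    intro w
    simp only [hg4def, hgcdef, hhcdef, hode4 (u w)]
    push_cast
    ring
  -- smoothness of all players on U
  have hsu : ContDiffOn ℝ ∞ u U := hu.of_le (by simp)
  have hsv : ContDiffOn ℝ ∞ v U := Complex.ofRealCLM.contDiff.comp_contDiffOn hsu
  have hs0 : ContDiffOn ℝ ∞ u0 U := wd_contDiffOn hU hsv
  have hs1 : ContDiffOn ℝ ∞ u1 U := wd_contDiffOn hU hs0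
  have hs2 : ContDiffOn ℝ ∞ u2 U := wd_contDiffOn hU hs1
  have hs3 : ContDiffOn ℝ ∞ u3 U := wd_contDiffOn hU hs2
  have hs4 : ContDiffOn ℝ ∞ u4 U := wd_contDiffOn hU hs3
  have hsh : ContDiffOn ℝ ∞ hc U := (Complex.ofRealCLM.contDiff.comp hfi).comp_contDiffOn hsu
  have hsg : ContDiffOn ℝ ∞ gc U := (Complex.ofRealCLM.contDiff.comp hf1).comp_contDiffOn hsu
  have hsg2 : ContDiffOn ℝ ∞ g2 U := (Complex.ofRealCLM.contDiff.comp hf2).comp_contDiffOn hsu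
  have hsg3 : ContDiffOn ℝ ∞ g3 U := (Complex.ofRealCLM.contDiff.comp hf3).comp_contDiffOn hsu
  -- chain rule facts
  have cd_h : ∀ w ∈ U, wd (-Complex.I) hc w = gc w * u0 w := by
    intro w hw
    simp only [hhcdef, hgcdef, hu0def, hvdef]
    exact wd_comp_real f u ((hfi.differentiable hone) (u w)) (diffAt hU hsu hw)
  have cd_g : ∀ w ∈ U, wd (-Complex.I) gc w = g2 w * u0 w := by
    intro w hw
    simp only [hgcdef, hg2def, hu0def, hvdef]
    exact wd_comp_real (deriv f) u ((hf1.differentiable hone) (u w)) (diffAt hU hsu hw)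
  have cd_g2 : ∀ w ∈ U, wd (-Complex.I) g2 w = g3 w * u0 w := by
    intro w hw
    simp only [hg2def, hg3def, hu0def, hvdef]
    exact wd_comp_real (deriv (deriv f)) u ((hf2.differentiable hone) (u w)) (diffAt hU hsu hw)
  have cd_g3 : ∀ w ∈ U, wd (-Complex.I) g3 w = g4 w * u0 w := by
    intro w hw
    simp only [hg3def, hg4def, hu0def, hvdef]
    exact wd_comp_real (deriv (deriv (deriv f))) u ((hf3.differentiable hone) (u w))
      (diffAt hU hsu hw)
  -- z̄-derivatives of the z-derivative tower
  have hb0 : ∀ w ∈ U, wd Complex.I u0 w = -hc w := by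
    intro w hw
    calc wd Complex.I u0 w = wd Complex.I (wd (-Complex.I) v) w := by rw [hu0def]
      _ = wd (-Complex.I) (wd Complex.I v) w := wd_comm hU hsv hw
      _ = -↑(f (u w)) := hueq w hw
      _ = -hc w := by rw [hhcdef]
  have hb1 : ∀ w ∈ U, wd Complex.I u1 w = -(gc w * u0 w) := by
    intro w hw
    have h1 : wd Complex.I u1 w = wd (-Complex.I) (wd Complex.I u0) w := by
      rw [hu1def]; exact wd_comm hU hs0 hw
    rw [h1, wd_congr (g₂ := fun x => -hc x) hU hb0 hw, wd_neg, cd_h w hw]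
  have hb2 : ∀ w ∈ U, wd Complex.I u2 w = -(g2 w * u0 w ^ 2 + gc w * u1 w) := by
    intro w hw
    have d_gc : DifferentiableAt ℝ gc w := diffAt hU hsg hw
    have d_u0 : DifferentiableAt ℝ u0 w := diffAt hU hs0 hw
    have h1 : wd Complex.I u2 w = wd (-Complex.I) (wd Complex.I u1) w := by
      rw [hu2def]; exact wd_comm hU hs1 hw
    rw [h1, wd_congr (g₂ := fun x => -(gc x * u0 x)) hU hb1 hw, wd_neg,
      wd_mul d_gc d_u0, cd_g w hw, ← hu1def]
    ring
  have hb3 : ∀ w ∈ U, wd Complex.I u3 w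
      = -(g3 w * u0 w ^ 3 + 3 * (g2 w * (u0 w * u1 w)) + gc w * u2 w) := by
    intro w hw
    have d_gc : DifferentiableAt ℝ gc w := diffAt hU hsg hw
    have d_g2 : DifferentiableAt ℝ g2 w := diffAt hU hsg2 hw
    have d_u0 : DifferentiableAt ℝ u0 w := diffAt hU hs0 hw
    have d_u1 : DifferentiableAt ℝ u1 w := diffAt hU hs1 hw
    have h1 : wd Complex.I u3 w = wd (-Complex.I) (wd Complex.I u2) w := by
      rw [hu3def]; exact wd_comm hU hs2 hw
    rw [h1, wd_congr (g₂ := fun x => -(g2 x * u0 x ^ 2 + gc x * u1 x)) hU hb2 hw, wd_neg]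
    simp (disch := fun_prop) only [wd_add, wd_mul, wd_pow]
    rw [cd_g w hw, cd_g2 w hw, ← hu1def, ← hu2def]
    push_cast
    ring
  have hb4 : ∀ w ∈ U, wd Complex.I u4 w
      = -(g4 w * u0 w ^ 4 + 6 * (g3 w * (u0 w ^ 2 * u1 w)) + 3 * (g2 w * u1 w ^ 2)
          + 4 * (g2 w * (u0 w * u2 w)) + gc w * u3 w) := by
    intro w hw
    have d_gc : DifferentiableAt ℝ gc w := diffAt hU hsg hw
    have d_g2 : DifferentiableAt ℝ g2 w := diffAt hU hsg2 hw
    have d_g3 : DifferentiableAt ℝ g3 w := diffAt hU hsg3 hw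
    have d_u0 : DifferentiableAt ℝ u0 w := diffAt hU hs0 hw
    have d_u1 : DifferentiableAt ℝ u1 w := diffAt hU hs1 hw
    have d_u2 : DifferentiableAt ℝ u2 w := diffAt hU hs2 hw
    have h1 : wd Complex.I u4 w = wd (-Complex.I) (wd Complex.I u3) w := by
      rw [hu4def]; exact wd_comm hU hs3 hw
    rw [h1, wd_congr
      (g₂ := fun x => -(g3 x * u0 x ^ 3 + 3 * (g2 x * (u0 x * u1 x)) + gc x * u2 x))
      hU hb3 hw, wd_neg]
    simp (disch := fun_prop) only [wd_add, wd_mul, wd_pow, wd_const]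
    rw [cd_g w hw, cd_g2 w hw, cd_g3 w hw, ← hu1def, ← hu2def, ← hu3def]
    push_cast
    ring
  -- z̄-derivative of P
  have hBP : ∀ w ∈ U, wd Complex.I
      (fun x => u4 x - 5 * ↑α * u2 x * u1 x - 5 * ↑α ^ 2 * u2 x * u0 x ^ 2
        - 5 * ↑α ^ 2 * u1 x ^ 2 * u0 x + ↑α ^ 4 * u0 x ^ 5) w
      = -(gc w * u3 w) + (↑α * gc w + 2 * ↑α ^ 2 * hc w) * (u0 w * u2 w)
        + (2 * ↑α * gc w - ↑α ^ 2 * hc w) * u1 w ^ 2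
        + (2 * ↑α ^ 2 * gc w - 2 * ↑α ^ 3 * hc w) * (u0 w ^ 2 * u1 w)
        - ↑α ^ 4 * hc w * u0 w ^ 4 := by
    intro w hw
    have d_u0 : DifferentiableAt ℝ u0 w := diffAt hU hs0 hw
    have d_u1 : DifferentiableAt ℝ u1 w := diffAt hU hs1 hw
    have d_u2 : DifferentiableAt ℝ u2 w := diffAt hU hs2 hw
    have d_u3 : DifferentiableAt ℝ u3 w := diffAt hU hs3 hw
    have d_u4 : DifferentiableAt ℝ u4 w := diffAt hU hs4 hw
    simp (disch := fun_prop) only [wd_sub, wd_add, wd_mul, wd_pow, wd_const]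
    rw [hb0 w hw, hb1 w hw, hb2 w hw, hb4 w hw, e2 w, e3 w, e4 w]
    push_cast
    ring
  -- final assembly
  have hfold : ((deriv f (u z) : ℝ) : ℂ) = gc z := by rw [hgcdef]
  rw [wd_congr hU hBP hz, hfold]
  have d_u0 : DifferentiableAt ℝ u0 z := diffAt hU hs0 hz
  have d_u1 : DifferentiableAt ℝ u1 z := diffAt hU hs1 hz
  have d_u2 : DifferentiableAt ℝ u2 z := diffAt hU hs2 hz
  have d_u3 : DifferentiableAt ℝ u3 z := diffAt hU hs3 hz
  have d_gc : DifferentiableAt ℝ gc z := diffAt hU hsg hz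
  have d_hc : DifferentiableAt ℝ hc z := diffAt hU hsh hz
  simp (disch := fun_prop) only [wd_sub, wd_add, wd_mul, wd_pow, wd_const, wd_neg]
  rw [cd_h z hz, cd_g z hz, e2 z, ← hu1def, ← hu2def, ← hu3def, ← hu4def]
  push_cast
  ring
end
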